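/- arXiv:1801.00836 — 6 statements merged into one kernel-verified Lean document; each statement's English description precedes it below -/
import Mathlib

section
/- Let λ > 0 and β ∈ ℝ. Suppose ψ : (0,1] → ℝ is twice differentiable on (0,1), satisfies the radially symmetric Poisson–Boltzmann equation (ξ·ψ'(ξ))' = (ξ/λ²)·(exp(ψ(ξ)) − exp(−ψ(ξ))) for all ξ ∈ (0,1), satisfies lim_{ξ→0⁺} ξ·ψ'(ξ) = 0 and lim_{ξ→1⁻} ψ'(ξ) = β, and the function ξ ↦ ξ·(exp(ψ(ξ)) − exp(−ψ(ξ))) is integrable on (0,1). Then G₂ − G₁ = λ²·β, where G₁ = ∫₀¹ ξ·exp(−ψ(ξ)) dξ and G₂ = ∫₀¹ ξ·exp(ψ(ξ)) dξ. -/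
open Real Set Filter MeasureTheory

/-- The identity `G₂ - G₁ = λ²·β` obtained by integrating the radially symmetric
Poisson–Boltzmann equation `(ξ ψ')' = (ξ/λ²)(e^ψ - e^{-ψ})` over `(0,1)` with
boundary conditions `ξ ψ'(ξ) → 0` as `ξ → 0⁺` and `ψ'(ξ) → β` as `ξ → 1⁻`. -/
theorem stmt_0 (lam β : ℝ) (hlam : 0 < lam) (ψ ψ' : ℝ → ℝ)
    (hderiv : ∀ ξ ∈ Set.Ioo (0:ℝ) 1, HasDerivAt ψ (ψ' ξ) ξ)
    (hode : ∀ ξ ∈ Set.Ioo (0:ℝ) 1,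
      HasDerivAt (fun x => x * ψ' x)
        (ξ / lam ^ 2 * (Real.exp (ψ ξ) - Real.exp (-ψ ξ))) ξ)
    (hbc0 : Tendsto (fun ξ => ξ * ψ' ξ) (nhdsWithin 0 (Set.Ioi 0)) (nhds 0))
    (hbc1 : Tendsto ψ' (nhdsWithin 1 (Set.Iio 1)) (nhds β))
    (hint : IntegrableOn (fun ξ => ξ * (Real.exp (ψ ξ) - Real.exp (-ψ ξ)))
      (Set.Ioo 0 1)) :
    (∫ ξ in Set.Ioo (0:ℝ) 1, ξ * Real.exp (ψ ξ)) -
      (∫ ξ in Set.Ioo (0:ℝ) 1, ξ * Real.exp (-ψ ξ)) = lam ^ 2 * β := by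
  have hψcont : ContinuousOn ψ (Set.Ioo 0 1) :=
    fun x hx => (hderiv x hx).continuousAt.continuousWithinAt
  -- integrability of each piece
  have hmeas1 : AEStronglyMeasurable (fun ξ => ξ * Real.exp (ψ ξ))
      (volume.restrict (Set.Ioo (0:ℝ) 1)) := by
    refine ContinuousOn.aestronglyMeasurable ?_ measurableSet_Ioo
    exact continuousOn_id.mul (hψcont.rexp)
  have hmeas2 : AEStronglyMeasurable (fun ξ => ξ * Real.exp (-ψ ξ))
      (volume.restrict (Set.Ioo (0:ℝ) 1)) := by
    refine ContinuousOn.aestronglyMeasurable ?_ measurableSet_Ioo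
    exact continuousOn_id.mul (hψcont.neg.rexp)
  have hξint : IntegrableOn (fun ξ : ℝ => ξ) (Set.Ioo 0 1) :=
    (continuous_id.integrableOn_Icc (a := (0:ℝ)) (b := 1)).mono_set Set.Ioo_subset_Icc_self
  have hbound : IntegrableOn
      (fun ξ => ξ + |ξ * (Real.exp (ψ ξ) - Real.exp (-ψ ξ))|) (Set.Ioo 0 1) :=
    hξint.add hint.abs
  have key : ∀ ξ ∈ Set.Ioo (0:ℝ) 1, ‖ξ * Real.exp (ψ ξ)‖ ≤
      ξ + |ξ * (Real.exp (ψ ξ) - Real.exp (-ψ ξ))| ∧ ‖ξ * Real.exp (-ψ ξ)‖ ≤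
      ξ + |ξ * (Real.exp (ψ ξ) - Real.exp (-ψ ξ))| := by
    intro ξ hξ
    have h0 : 0 < ξ := hξ.1
    have habs : |ξ * (Real.exp (ψ ξ) - Real.exp (-ψ ξ))|
        = ξ * |Real.exp (ψ ξ) - Real.exp (-ψ ξ)| := by
      rw [abs_mul, abs_of_pos h0]
    constructor
    · rw [Real.norm_eq_abs, abs_of_pos (by positivity), habs]
      rcases le_or_gt (ψ ξ) 0 with h | h
      · nlinarith [Real.exp_le_one_iff.2 h, abs_nonneg (Real.exp (ψ ξ) - Real.exp (-ψ ξ))]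
      · have : Real.exp (ψ ξ) - Real.exp (-ψ ξ) ≥ 0 := by
          have := Real.exp_le_exp.2 (by linarith : -ψ ξ ≤ ψ ξ); linarith
        rw [abs_of_nonneg this]
        nlinarith [Real.exp_pos (-ψ ξ), Real.exp_le_one_iff.2 (by linarith : -ψ ξ ≤ 0)]
    · rw [Real.norm_eq_abs, abs_of_pos (by positivity), habs]
      rcases le_or_gt (ψ ξ) 0 with h | h
      · have : Real.exp (-ψ ξ) - Real.exp (ψ ξ) ≥ 0 := by
          have := Real.exp_le_exp.2 (by linarith : ψ ξ ≤ -ψ ξ); linarith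
        rw [abs_sub_comm, abs_of_nonneg this]
        nlinarith [Real.exp_pos (ψ ξ), Real.exp_le_one_iff.2 h]
      · nlinarith [Real.exp_le_one_iff.2 (by linarith : -ψ ξ ≤ 0),
          abs_nonneg (Real.exp (ψ ξ) - Real.exp (-ψ ξ))]
  have hint1 : IntegrableOn (fun ξ => ξ * Real.exp (ψ ξ)) (Set.Ioo 0 1) := by
    refine hbound.integrable.mono hmeas1 ?_
    filter_upwards [ae_restrict_mem measurableSet_Ioo] with ξ hξ
    refine (key ξ hξ).1.trans (le_abs_self _)
  have hint2 : IntegrableOn (fun ξ => ξ * Real.exp (-ψ ξ)) (Set.Ioo 0 1) := by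
    refine hbound.integrable.mono hmeas2 ?_
    filter_upwards [ae_restrict_mem measurableSet_Ioo] with ξ hξ
    refine (key ξ hξ).2.trans (le_abs_self _)
  -- FTC
  have hintderiv : IntervalIntegrable
      (fun ξ => ξ / lam ^ 2 * (Real.exp (ψ ξ) - Real.exp (-ψ ξ))) volume 0 1 := by
    rw [intervalIntegrable_iff_integrableOn_Ioo_of_le (by norm_num)]
    have := hint.div_const (lam ^ 2)
    exact MeasureTheory.IntegrableOn.congr_fun this (fun ξ _ => by ring) measurableSet_Ioo
  have hb1 : Tendsto (fun ξ => ξ * ψ' ξ) (nhdsWithin 1 (Set.Iio 1)) (nhds β) := by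
    have h1 : Tendsto (fun ξ : ℝ => ξ) (nhdsWithin 1 (Set.Iio 1)) (nhds 1) :=
      tendsto_id.mono_left nhdsWithin_le_nhds
    simpa using h1.mul hbc1
  have hftc := intervalIntegral.integral_eq_sub_of_hasDerivAt_of_tendsto
    (by norm_num : (0:ℝ) < 1) hode hintderiv hbc0 hb1
  rw [intervalIntegral.integral_of_le (by norm_num : (0:ℝ) ≤ 1),
    MeasureTheory.integral_Ioc_eq_integral_Ioo] at hftc
  have hsplit : (∫ ξ in Set.Ioo (0:ℝ) 1,
      ξ / lam ^ 2 * (Real.exp (ψ ξ) - Real.exp (-ψ ξ)))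
      = ((∫ ξ in Set.Ioo (0:ℝ) 1, ξ * Real.exp (ψ ξ)) -
        (∫ ξ in Set.Ioo (0:ℝ) 1, ξ * Real.exp (-ψ ξ))) / lam ^ 2 := by
    rw [← integral_sub hint1 hint2, ← integral_div]
    congr 1; ext ξ; ring
  rw [hsplit] at hftc
  field_simp at hftc
  linarith
end

section
/- The function ψ is twice differentiable on (0,1) and satisfies ψ''(ξ) + ψ'(ξ)/ξ = exp(ψ(ξ))/λ² for all ξ ∈ (0,1), together with the boundary condition lim_{ξ→1⁻} ψ'(ξ) = β. In other words, the explicit formula ψ(ξ) = 2·log(cosech(arcoth((β+2)/2) − log ξ)) − log(ξ²/(2λ²)) is an exact solution of the large-β approximation (1/ξ)·(ξψ')' = exp(ψ)/λ² of the Poisson–Boltzmann equation with wall boundary flux β. -/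
/-!
With `K = e^{2a} = (β + 4)/β` one has `sinh (a - log ξ) = (K - ξ²)/(2 e^a ξ)`, so on `(0, 1)`
the profile collapses to `ψ ξ = log (8 λ² K) - 2 log (K - ξ²)`. Hence `ψ' = 4ξ/(K - ξ²)`,
`ψ'' + ψ'/ξ = 8K/(K - ξ²)² = e^ψ/λ²`, and `ψ'(1) = 4/(K - 1) = β`.
-/

open Real Set Filter

/-- The paper's large-β approximate profile
`ψ(ξ) = 2 log(cosech(arcoth((β+2)/2) - log ξ)) - log(ξ²/(2λ²))`,
written with `a = (1/2)·log((β+4)/β) = arcoth((β+2)/2)`. -/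
noncomputable def psiL (lam β ξ : ℝ) : ℝ :=
  -2 * Real.log (Real.sinh ((1/2) * Real.log ((β + 4) / β) - Real.log ξ)) +
    Real.log (2 * lam ^ 2) - 2 * Real.log ξ

section LogSubSq

variable {K x : ℝ}

theorem hasDerivAt_const_sub_two_mul_log_sub_sq (C : ℝ) (hx : x ^ 2 ≠ K) :
    HasDerivAt (fun y => C - 2 * log (K - y ^ 2)) (4 * x / (K - x ^ 2)) x := by
  refine ((((hasDerivAt_pow 2 x).const_sub K).log (sub_ne_zero.mpr hx.symm)).const_mul 2
    |>.const_sub C).congr_deriv ?_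
  field_simp
  ring

theorem hasDerivAt_mul_div_sub_sq (hx : x ^ 2 ≠ K) :
    HasDerivAt (fun y => 4 * y / (K - y ^ 2)) (4 * (K + x ^ 2) / (K - x ^ 2) ^ 2) x := by
  have hK : K - x ^ 2 ≠ 0 := sub_ne_zero.mpr (Ne.symm hx)
  refine (((hasDerivAt_id' x).const_mul 4).div ((hasDerivAt_pow 2 x).const_sub K) hK).congr_deriv ?_
  ring

theorem radial_laplacian_eq_exp_log_sub_sq {lam : ℝ} (hlam : lam ≠ 0) (hx0 : x ≠ 0)
    (hx : x ^ 2 < K) :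
    4 * (K + x ^ 2) / (K - x ^ 2) ^ 2 + 4 * x / (K - x ^ 2) / x =
      exp (log (8 * lam ^ 2 * K) - 2 * log (K - x ^ 2)) / lam ^ 2 := by
  have hKx : 0 < K - x ^ 2 := by linarith
  have hK : 0 < K := by nlinarith
  have hexp : exp (2 * log (K - x ^ 2)) = (K - x ^ 2) ^ 2 := by
    rw [show (2 : ℝ) = (2 : ℕ) by norm_num, exp_nat_mul, exp_log hKx]
  rw [exp_sub, exp_log (by positivity), hexp]
  field_simp
  ring

end LogSubSq

theorem sinh_sub_log (a : ℝ) {x : ℝ} (hx : 0 < x) :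
    sinh (a - log x) = (exp a ^ 2 - x ^ 2) / (2 * exp a * x) := by
  rw [sinh_eq, exp_sub, exp_neg, exp_sub, exp_log hx]
  field_simp

theorem exp_half_mul_log_sq {K : ℝ} (hK : 0 < K) : exp ((1 / 2) * log K) ^ 2 = K := by
  rw [← exp_nat_mul, ← mul_assoc]
  norm_num [exp_log hK]

theorem psiL_eq_log_sub_log_sub_sq {lam β x : ℝ} (hlam : lam ≠ 0) (hβ : 0 < β) (hx : 0 < x)
    (hxK : x ^ 2 < (β + 4) / β) :
    psiL lam β x = log (8 * lam ^ 2 * ((β + 4) / β)) - 2 * log ((β + 4) / β - x ^ 2) := by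
  set K := (β + 4) / β
  set e := exp ((1 / 2) * log K)
  have he : e ^ 2 = K := exp_half_mul_log_sq (by positivity)
  have hsinh : log (sinh ((1 / 2) * log K - log x)) = log (K - x ^ 2) - log (2 * e) - log x := by
    rw [sinh_sub_log _ hx, he, log_div (by linarith) (by positivity), log_mul (by positivity) hx.ne']
    ring
  have hconst : log (8 * lam ^ 2 * K) = log (2 * lam ^ 2) + 2 * log (2 * e) := by
    rw [← he, show 8 * lam ^ 2 * e ^ 2 = 2 * lam ^ 2 * (2 * e) ^ 2 by ring,
      log_mul (by positivity) (by positivity), log_pow]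
    push_cast
    ring
  rw [psiL, hsinh, hconst]
  ring

section psiL

variable {lam β x : ℝ}

theorem sq_lt_div_of_mem_Ioo (hβ : 0 < β) {y : ℝ} (hy : y ∈ Ioo 0 1) : y ^ 2 < (β + 4) / β :=
  calc y ^ 2 < 1 := by nlinarith [hy.1, hy.2]
    _ < (β + 4) / β := (one_lt_div hβ).mpr (by linarith)

theorem hasDerivAt_psiL (hlam : lam ≠ 0) (hβ : 0 < β) (hx : x ∈ Ioo 0 1) :
    HasDerivAt (psiL lam β) (4 * x / ((β + 4) / β - x ^ 2)) x := by
  refine (hasDerivAt_const_sub_two_mul_log_sub_sq (log (8 * lam ^ 2 * ((β + 4) / β))) (sq_lt_div_of_mem_Ioo hβ hx).ne).congr_of_eventuallyEq ?_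
  filter_upwards [Ioo_mem_nhds hx.1 hx.2] with y hy
  exact psiL_eq_log_sub_log_sub_sq hlam hβ hy.1 (sq_lt_div_of_mem_Ioo hβ hy)

theorem hasDerivAt_deriv_psiL (hlam : lam ≠ 0) (hβ : 0 < β) (hx : x ∈ Ioo 0 1) :
    HasDerivAt (deriv (psiL lam β))
      (4 * ((β + 4) / β + x ^ 2) / ((β + 4) / β - x ^ 2) ^ 2) x := by
  refine (hasDerivAt_mul_div_sub_sq (sq_lt_div_of_mem_Ioo hβ hx).ne).congr_of_eventuallyEq ?_
  filter_upwards [Ioo_mem_nhds hx.1 hx.2] with y hy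
  exact (hasDerivAt_psiL hlam hβ hy).deriv

theorem tendsto_deriv_psiL (hlam : lam ≠ 0) (hβ : 0 < β) :
    Tendsto (deriv (psiL lam β)) (nhdsWithin 1 (Iio 1)) (nhds β) := by
  have hK : (1 : ℝ) ^ 2 ≠ (β + 4) / β := by
    rw [one_pow]
    exact ((one_lt_div hβ).mpr (by linarith)).ne
  have hval : 4 * 1 / ((β + 4) / β - 1 ^ 2) = β := by
    field_simp
    ring
  have hlim := (hasDerivAt_mul_div_sub_sq hK).continuousAt.tendsto.mono_left
    (nhdsWithin_le_nhds (s := Iio 1))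
  rw [hval] at hlim
  refine hlim.congr' ?_
  filter_upwards [Ioo_mem_nhdsLT zero_lt_one] with ξ hξ
  exact (hasDerivAt_psiL hlam hβ hξ).deriv.symm

end psiL

/-- The explicit profile `ψ` is twice differentiable on `(0,1)`, satisfies
`ψ'' + ψ'/ξ = e^ψ/λ²` there, and `ψ'(ξ) → β` as `ξ → 1⁻`: it solves the
large-β approximation of the Poisson–Boltzmann equation with wall flux `β`. -/
theorem stmt_1 (lam β : ℝ) (hlam : 0 < lam) (hβ : 0 < β) :
    (∀ ξ ∈ Set.Ioo (0:ℝ) 1,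
        DifferentiableAt ℝ (psiL lam β) ξ ∧
        DifferentiableAt ℝ (deriv (psiL lam β)) ξ) ∧
    (∀ ξ ∈ Set.Ioo (0:ℝ) 1,
        deriv (deriv (psiL lam β)) ξ + deriv (psiL lam β) ξ / ξ =
          Real.exp (psiL lam β ξ) / lam ^ 2) ∧
    Tendsto (deriv (psiL lam β)) (nhdsWithin 1 (Set.Iio 1)) (nhds β) := by
  have hψ' := fun {ξ} (hξ : ξ ∈ Ioo (0 : ℝ) 1) => hasDerivAt_psiL hlam.ne' hβ hξ
  have hψ'' := fun {ξ} (hξ : ξ ∈ Ioo (0 : ℝ) 1) => hasDerivAt_deriv_psiL hlam.ne' hβ hξ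
  refine ⟨fun ξ hξ => ⟨(hψ' hξ).differentiableAt, (hψ'' hξ).differentiableAt⟩, fun ξ hξ => ?_,
    tendsto_deriv_psiL hlam.ne' hβ⟩
  have hξK := sq_lt_div_of_mem_Ioo hβ hξ
  rw [(hψ'' hξ).deriv, (hψ' hξ).deriv, psiL_eq_log_sub_log_sub_sq hlam.ne' hβ hξ.1 hξK]
  exact radial_laplacian_eq_exp_log_sub_sq hlam.ne' hξ.1.ne' hξK
end

section
/- One has ψ'(ξ) > 0 for all ξ ∈ (0,1); consequently ψ is strictly increasing on (0,1], so its minimum is attained at the pore centre, and ψ(ξ) > 3·log 2 + 2·log λ − log((β+4)/β) for every ξ ∈ (0,1]. -/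
open Real Set Filter

/-! Writing `r = (β + 4) / β = exp (2a)`, one has `sinh (a - log ξ) = (r - ξ²) / (2 ξ √r)`, so
`ψ(ξ) = 3 log 2 + 2 log λ + log r - 2 log (r - ξ²)` for `0 < ξ < √r`. Since `r > 1`, this is
strictly increasing on `[0, √r) ⊇ (0, 1]`, and its value at `ξ = 0` is the stated bound. -/

theorem Real.sinh_half_log_sub_log {r ξ : ℝ} (hr : 0 < r) (hξ : 0 < ξ) :
    sinh (1 / 2 * log r - log ξ) = (r - ξ ^ 2) / (2 * ξ * √r) := by
  have hsqrt : 0 < √r := sqrt_pos.mpr hr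
  rw [show 1 / 2 * log r = log √r by rw [log_sqrt hr.le]; ring, ← log_div hsqrt.ne' hξ.ne',
    sinh_log (div_pos hsqrt hξ), inv_div]
  field_simp
  rw [sq_sqrt hr.le]

section LogSubSq

variable {r : ℝ}

theorem hasDerivAt_neg_two_mul_log_sub_sq {ξ : ℝ} (h : ξ ^ 2 ≠ r) :
    HasDerivAt (fun x => -2 * log (r - x ^ 2)) (4 * ξ / (r - ξ ^ 2)) ξ := by
  have hsub : HasDerivAt (fun x : ℝ => r - x ^ 2) (-(2 * ξ)) ξ := by
    simpa using (hasDerivAt_pow 2 ξ).const_sub r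
  rw [show 4 * ξ / (r - ξ ^ 2) = -2 * (-(2 * ξ) / (r - ξ ^ 2)) by ring]
  exact (hsub.log (sub_ne_zero.mpr h.symm)).const_mul (-2)

theorem strictMonoOn_neg_two_mul_log_sub_sq :
    StrictMonoOn (fun x => -2 * log (r - x ^ 2)) (Ico 0 √r) := by
  intro x hx y hy hxy
  have hy2 : y ^ 2 < r := (lt_sqrt (hx.1.trans hxy.le)).mp hy.2
  have hxy2 : x ^ 2 < y ^ 2 := pow_lt_pow_left₀ hxy hx.1 two_ne_zero
  have := log_lt_log (sub_pos.mpr hy2) (sub_lt_sub_left hxy2 r)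
  simp only
  linarith

end LogSubSq

theorem psiL_eq_of_sq_lt {lam β ξ : ℝ} (hlam : lam ≠ 0) (hξ : 0 < ξ)
    (hξβ : ξ ^ 2 < (β + 4) / β) :
    psiL lam β ξ = 3 * log 2 + 2 * log lam + log ((β + 4) / β) +
      -2 * log ((β + 4) / β - ξ ^ 2) := by
  set r := (β + 4) / β
  have hr : 0 < r := (pow_pos hξ 2).trans hξβ
  have hsqrt : 0 < √r := sqrt_pos.mpr hr
  rw [psiL, sinh_half_log_sub_log hr hξ, log_div (sub_pos.mpr hξβ).ne' (by positivity),
    log_mul (by positivity) hsqrt.ne', log_mul two_ne_zero hξ.ne', log_sqrt hr.le,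
    log_mul two_ne_zero (pow_ne_zero 2 hlam), log_pow]
  push_cast
  ring

/-- `ψ' > 0` on `(0,1)`, so `ψ` is strictly increasing on `(0,1]`: its minimum
is attained at the pore centre, and `ψ(ξ)` exceeds the central value
`3 log 2 + 2 log λ - log((β+4)/β)` for every `ξ ∈ (0,1]`. -/
theorem stmt_3 (lam β : ℝ) (hlam : 0 < lam) (hβ : 0 < β) :
    (∀ ξ ∈ Set.Ioo (0:ℝ) 1, 0 < deriv (psiL lam β) ξ) ∧
    StrictMonoOn (psiL lam β) (Set.Ioc (0:ℝ) 1) ∧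
    (∀ ξ ∈ Set.Ioc (0:ℝ) 1,
      psiL lam β ξ >
        3 * Real.log 2 + 2 * Real.log lam - Real.log ((β + 4) / β)) := by
  set r := (β + 4) / β
  set g := fun x : ℝ => -2 * log (r - x ^ 2)
  have hr : 1 < r := (one_lt_div hβ).mpr (by linarith)
  have hIoc : Ioc (0 : ℝ) 1 ⊆ Ioo 0 √r :=
    fun x hx => ⟨hx.1, hx.2.trans_lt (lt_sqrt_of_sq_lt (by rwa [one_pow]))⟩
  have hpsi : EqOn (psiL lam β) (fun x => 3 * log 2 + 2 * log lam + log r + g x) (Ioo 0 √r) :=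
    fun x hx => psiL_eq_of_sq_lt hlam.ne' hx.1 ((lt_sqrt hx.1.le).mp hx.2)
  have hg : StrictMonoOn g (Ico 0 √r) := strictMonoOn_neg_two_mul_log_sub_sq
  refine ⟨fun ξ hξ => ?_, ?_, fun ξ hξ => ?_⟩
  · have hξ' := hIoc (Ioo_subset_Ioc_self hξ)
    have hξr : ξ ^ 2 < r := (lt_sqrt hξ.1.le).mp hξ'.2
    rw [(hpsi.eventuallyEq_of_mem (isOpen_Ioo.mem_nhds hξ')).deriv_eq,
      ((hasDerivAt_neg_two_mul_log_sub_sq hξr.ne).const_add _).deriv]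
    exact div_pos (by linarith [hξ.1]) (sub_pos.mpr hξr)
  · exact ((hg.mono (hIoc.trans Ioo_subset_Ico_self)).const_add _).congr (hpsi.mono hIoc).symm
  · have hg0 : g 0 < g ξ :=
      hg ⟨le_rfl, hξ.1.trans (hIoc hξ).2⟩ (Ioo_subset_Ico_self (hIoc hξ)) hξ.1
    have hg0_eq : g 0 = -2 * log r := by simp [g]
    rw [hpsi (hIoc hξ)]
    linarith
end

section
/- The improper integral ∫₀¹ ξ·exp(ψ(ξ)) dξ converges and equals λ²·β exactly. That is, the quantity G₂ computed from the explicit large-β profile equals λ²β. -/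
open Real Set Filter MeasureTheory

/-!
With `c = (β + 4)/β` we have `a = log √c`, so `sinh (a - log ξ) = (c - ξ²)/(2 √c ξ)` and the
integrand collapses to the rational function `8 λ² c ξ / (c - ξ²)²`. It has the antiderivative
`4 λ² c / (c - ξ²)`, continuous on `[0, 1]` because `c > 1`, and
`4 λ² c (1/(c - 1) - 1/c) = 4 λ²/(c - 1) = λ² β`.
-/

lemma Real.exp_neg_two_mul_log {s : ℝ} (hs : s ≠ 0) : exp (-2 * log s) = (s ^ 2)⁻¹ := by
  rw [show -2 * log s = -log (s ^ 2) by rw [Real.log_pow]; push_cast; ring, exp_neg,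
    exp_log (by positivity)]

lemma Real.sinh_log_sub_log {x y : ℝ} (hx : 0 < x) (hy : 0 < y) :
    sinh (log x - log y) = (x / y - y / x) / 2 := by
  rw [sinh_eq, exp_sub, neg_sub, exp_sub, exp_log hx, exp_log hy]

lemma mul_exp_psiL {lam β ξ : ℝ} (hlam : lam ≠ 0) (hβ : 0 < β) (hξ : 0 < ξ)
    (hξc : ξ ^ 2 ≠ (β + 4) / β) :
    ξ * exp (psiL lam β ξ) = 8 * lam ^ 2 * ((β + 4) / β) * (ξ / ((β + 4) / β - ξ ^ 2) ^ 2) := by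
  set c := (β + 4) / β
  have hc : 0 < c := by positivity
  have hsqrt : (1 / 2) * log c = log √c := by rw [Real.log_sqrt hc.le]; ring
  have hsq : √c ^ 2 = c := sq_sqrt hc.le
  have hsinh : sinh (log √c - log ξ) ≠ 0 := by
    rw [Real.sinh_log_sub_log (sqrt_pos.2 hc) hξ]
    intro h
    apply hξc
    field_simp at h
    linarith
  rw [psiL, hsqrt, sub_eq_add_neg _ (2 * log ξ), ← neg_mul, exp_add, exp_add,
    Real.exp_neg_two_mul_log hsinh, Real.exp_neg_two_mul_log hξ.ne',
    exp_log (by positivity), Real.sinh_log_sub_log (sqrt_pos.2 hc) hξ]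
  have hne : c - ξ ^ 2 ≠ 0 := sub_ne_zero.2 (Ne.symm hξc)
  field_simp
  rw [hsq]
  field_simp
  norm_num

lemma continuousOn_div_sub_sq_sq {s : Set ℝ} {c : ℝ} (h : ∀ x ∈ s, c - x ^ 2 ≠ 0) :
    ContinuousOn (fun x => x / (c - x ^ 2) ^ 2) s :=
  continuousOn_id.div (by fun_prop) fun x hx => pow_ne_zero 2 (h x hx)

lemma integral_div_sub_sq_sq {a b c : ℝ} (h : ∀ x ∈ uIcc a b, c - x ^ 2 ≠ 0) :
    ∫ x in a..b, x / (c - x ^ 2) ^ 2 = ((c - b ^ 2)⁻¹ - (c - a ^ 2)⁻¹) / 2 := by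
  have hderiv : ∀ x ∈ uIcc a b,
      HasDerivAt (fun x => (c - x ^ 2)⁻¹ / 2) (x / (c - x ^ 2) ^ 2) x := by
    intro x hx
    have hsub : HasDerivAt (fun x : ℝ => c - x ^ 2) (-(2 * x)) x := by
      simpa using (hasDerivAt_pow 2 x).const_sub c
    refine ((hsub.inv (h x hx)).div_const 2).congr_deriv ?_
    ring
  rw [intervalIntegral.integral_eq_sub_of_hasDerivAt hderiv
    (continuousOn_div_sub_sq_sq h).intervalIntegrable]
  ring

/-- The cross-sectional Boltzmann factor `G₂ = ∫₀¹ ξ e^{ψ(ξ)} dξ` computed from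
the explicit large-β profile converges and equals `λ²·β` exactly. -/
theorem stmt_4 (lam β : ℝ) (hlam : 0 < lam) (hβ : 0 < β) :
    IntegrableOn (fun ξ => ξ * Real.exp (psiL lam β ξ)) (Set.Ioo 0 1) ∧
    (∫ ξ in Set.Ioo (0:ℝ) 1, ξ * Real.exp (psiL lam β ξ)) = lam ^ 2 * β := by
  set c := (β + 4) / β
  have hc : 1 < c := (one_lt_div hβ).2 (by linarith)
  have hden : ∀ x ∈ Icc (0 : ℝ) 1, c - x ^ 2 ≠ 0 := fun x hx => by
    nlinarith [pow_le_one₀ hx.1 hx.2 (n := 2)]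
  have heq : EqOn (fun ξ => ξ * exp (psiL lam β ξ))
      (fun ξ => 8 * lam ^ 2 * c * (ξ / (c - ξ ^ 2) ^ 2)) (Ioo 0 1) := fun ξ hξ =>
    mul_exp_psiL hlam.ne' hβ hξ.1 fun h => hden ξ (Ioo_subset_Icc_self hξ) (sub_eq_zero.2 h.symm)
  have hint : IntegrableOn (fun ξ => ξ / (c - ξ ^ 2) ^ 2) (Ioo 0 1) :=
    (continuousOn_div_sub_sq_sq hden).integrableOn_Icc.mono_set Ioo_subset_Icc_self
  refine ⟨IntegrableOn.congr_fun (hint.const_mul _) heq.symm measurableSet_Ioo, ?_⟩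
  rw [setIntegral_congr_fun measurableSet_Ioo heq, integral_const_mul,
    ← integral_Ioc_eq_integral_Ioo, ← intervalIntegral.integral_of_le zero_le_one,
    integral_div_sub_sq_sq (by rwa [uIcc_of_le zero_le_one]), one_pow, zero_pow two_ne_zero,
    sub_zero]
  have hcβ : c * β = β + 4 := div_mul_cancel₀ _ hβ.ne'
  have hc0 : c ≠ 0 := by positivity
  have hc1 : c - 1 ≠ 0 := by linarith
  clear_value c
  field_simp
  linear_combination (-2) * hcβ
end

section
/- The integral ∫₀¹ ξ·exp(−ψ(ξ)) dξ converges and equals (β² + 12β + 48)/(48·λ²·β·(β+4)) exactly. That is, the quantity G₁ computed from the explicit large-β profile equals (1/(48λ²))·(β²+12β+48)/(β(β+4)). -/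
open Real Set Filter MeasureTheory

/-- The cross-sectional Boltzmann factor `G₁ = ∫₀¹ ξ e^{-ψ(ξ)} dξ` computed from
the explicit large-β profile converges and equals
`(β² + 12β + 48)/(48 λ² β (β+4))` exactly. -/
theorem stmt_5 (lam β : ℝ) (hlam : 0 < lam) (hβ : 0 < β) :
    IntegrableOn (fun ξ => ξ * Real.exp (-psiL lam β ξ)) (Set.Ioo 0 1) ∧
    (∫ ξ in Set.Ioo (0:ℝ) 1, ξ * Real.exp (-psiL lam β ξ)) =
      (β ^ 2 + 12 * β + 48) / (48 * lam ^ 2 * β * (β + 4)) := by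
  set a : ℝ := (1/2) * Real.log ((β + 4) / β) with ha
  set c : ℝ := Real.exp a with hc
  have hcpos : 0 < c := Real.exp_pos a
  have hratio : (1:ℝ) < (β + 4) / β := by
    rw [lt_div_iff₀ hβ]; linarith
  have hapos : 0 < a := by
    have := Real.log_pos hratio
    rw [ha]; linarith
  have hc2 : c ^ 2 = (β + 4) / β := by
    rw [hc, ← Real.exp_nat_mul]
    have : (2:ℝ) * a = Real.log ((β + 4) / β) := by rw [ha]; ring
    push_cast
    rw [this, Real.exp_log (by positivity)]
  -- the key pointwise identity
  have key : ∀ ξ ∈ Set.Ioo (0:ℝ) 1,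
      ξ * Real.exp (-psiL lam β ξ) = (c^2*ξ - 2*ξ^3 + ξ^5/c^2) / (8*lam^2) := by
    intro ξ hξ
    obtain ⟨hξ0, hξ1⟩ := hξ
    have hlog : Real.log ξ < 0 := Real.log_neg hξ0 hξ1
    set S : ℝ := Real.sinh (a - Real.log ξ) with hS
    have hSpos : 0 < S := Real.sinh_pos_iff.mpr (by linarith)
    have hval : Real.exp (-psiL lam β ξ) = S^2 * ξ^2 / (2*lam^2) := by
      have hlogid : -psiL lam β ξ = Real.log (S^2 * ξ^2 / (2*lam^2)) := by
        rw [Real.log_div (by positivity) (by positivity),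
          Real.log_mul (by positivity) (by positivity),
          Real.log_pow, Real.log_pow]
        simp only [psiL, ← ha, ← hS]
        push_cast
        ring
      rw [hlogid, Real.exp_log (by positivity)]
    have hSval : S = (c/ξ - ξ/c) / 2 := by
      rw [hS, Real.sinh_eq]
      rw [neg_sub, Real.exp_sub, Real.exp_sub, Real.exp_log hξ0, ← hc]
    rw [hval, hSval]
    field_simp
    ring
  -- the polynomial substitute
  set g : ℝ → ℝ := fun ξ => (c^2*ξ - 2*ξ^3 + ξ^5/c^2) / (8*lam^2) with hg
  have hgc : Continuous g := by
    rw [hg]; fun_prop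
  have hgint : IntegrableOn g (Set.Ioo 0 1) :=
    (hgc.integrableOn_Icc (a := 0) (b := 1)).mono_set Set.Ioo_subset_Icc_self
  have hint : IntegrableOn (fun ξ => ξ * Real.exp (-psiL lam β ξ)) (Set.Ioo 0 1) :=
    hgint.congr_fun (fun ξ hξ => (key ξ hξ).symm) measurableSet_Ioo
  refine ⟨hint, ?_⟩
  have heq : (∫ ξ in Set.Ioo (0:ℝ) 1, ξ * Real.exp (-psiL lam β ξ)) =
      ∫ ξ in Set.Ioo (0:ℝ) 1, g ξ :=
    MeasureTheory.setIntegral_congr_fun measurableSet_Ioo key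
  rw [heq, ← MeasureTheory.integral_Ioc_eq_integral_Ioo,
    ← intervalIntegral.integral_of_le (zero_le_one)]
  have hpow : ∀ (k : ℕ) (d : ℝ), ∫ x in (0:ℝ)..1, d * x^k = d / (k+1) := by
    intro k d
    rw [intervalIntegral.integral_const_mul, integral_pow]
    simp [div_eq_mul_inv]
  have hgrw : (fun ξ => g ξ) = fun ξ =>
      (c^2/(8*lam^2)) * ξ^1 + (-2/(8*lam^2)) * ξ^3 + (1/(c^2*(8*lam^2))) * ξ^5 := by
    funext ξ; rw [hg]; field_simp; ring
  rw [hgrw,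
    intervalIntegral.integral_add (by apply Continuous.intervalIntegrable; fun_prop)
      (by apply Continuous.intervalIntegrable; fun_prop),
    intervalIntegral.integral_add (by apply Continuous.intervalIntegrable; fun_prop)
      (by apply Continuous.intervalIntegrable; fun_prop),
    hpow 1, hpow 3, hpow 5]
  rw [hc2]
  have hβ4 : (0:ℝ) < β + 4 := by linarith
  field_simp
  ring
end

section
/- Let R > 0, κ_p > 0, κ_n > 0, Q > 0, S > 0, and Q', S' ∈ ℝ. Let φ, φₓ : (0,R] → ℝ be functions such that r ↦ r·exp(φ(r)) and r ↦ r·exp(−φ(r)) are integrable on (0,R). Define the leading-order axial fluxes u_p(r) = −κ_p·(pₓ(r) + p(r)·φₓ(r)) and u_n(r) = −κ_n·(nₓ(r) − n(r)·φₓ(r)), where p(r) = S·e^{−φ(r)}, pₓ(r) = S'·e^{−φ(r)} − S·e^{−φ(r)}·φₓ(r), n(r) = Q·e^{φ(r)}, and nₓ(r) = Q'·e^{φ(r)} + Q·e^{φ(r)}·φₓ(r). Then the cross-sectional current I = ∫₀^R r·(u_p(r) − u_n(r)) dr satisfies I = R²·√(S·Q)·(κ_n·G₂·(Q'/Q) −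 κ_p·G₁·(S'/S)), where ψ(ξ) = φ(R·ξ) − (1/2)·log(S/Q), G₁ = ∫₀¹ ξ·exp(−ψ(ξ)) dξ and G₂ = ∫₀¹ ξ·exp(ψ(ξ)) dξ. -/
/-! With `p = S e^{-φ}` and `n = Q e^{φ}`, the drift term of each flux cancels the `φₓ`-part of
the chain-rule derivative, so the current is `κ_n Q' ∫ r e^{φ} - κ_p S' ∫ r e^{-φ}`. Rescaling
`r = Rξ` gives `R² G₂ √(S/Q)` and `R² G₁ / √(S/Q)` for these integrals, since the shift in `ψ` is
`log √(S/Q)`; the prefactor `√(SQ) = Q √(S/Q)` then absorbs the square roots. -/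

open Real Set MeasureTheory

theorem Real.exp_half_mul_log {x : ℝ} (hx : 0 < x) : exp (1 / 2 * log x) = √x := by
  rw [sqrt_eq_rpow, rpow_def_of_pos hx, mul_comm]

theorem Real.sqrt_mul_eq_mul_sqrt_div {S Q : ℝ} (hQ : 0 ≤ Q) : √(S * Q) = Q * √(S / Q) := by
  rcases hQ.eq_or_lt with rfl | hQ
  · simp
  rw [← sqrt_sq hQ.le, ← sqrt_mul (sq_nonneg Q), sqrt_sq hQ.le]
  congr 1
  field_simp

theorem setIntegral_Ioo_zero_one_mul_comp_mul {R : ℝ} (hR : 0 < R) (g : ℝ → ℝ) :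
    ∫ ξ in Ioo 0 1, ξ * g (R * ξ) = (∫ r in Ioo 0 R, r * g r) / R ^ 2 := by
  rw [← integral_Ioc_eq_integral_Ioo, ← intervalIntegral.integral_of_le zero_le_one,
    ← integral_Ioc_eq_integral_Ioo, ← intervalIntegral.integral_of_le hR.le]
  have hscale : ∀ ξ, ξ * g (R * ξ) = R⁻¹ * ((R * ξ) * g (R * ξ)) := fun ξ => by
    field_simp
  simp_rw [hscale]
  rw [intervalIntegral.integral_const_mul,
    intervalIntegral.integral_comp_mul_left (fun r => r * g r) hR.ne']
  simp only [mul_zero, mul_one, smul_eq_mul]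
  field_simp

theorem stmt_15_general (R κp κn Q S Q' S' : ℝ) (hR : 0 < R)
    (hQ : 0 < Q) (hS : 0 < S) (φ φx : ℝ → ℝ)
    (hintp : IntegrableOn (fun r => r * Real.exp (φ r)) (Set.Ioo 0 R))
    (hintm : IntegrableOn (fun r => r * Real.exp (-φ r)) (Set.Ioo 0 R)) :
    (∫ r in Set.Ioo (0:ℝ) R,
        r * ((-κp * ((S' * Real.exp (-φ r) - S * Real.exp (-φ r) * φx r) +
                (S * Real.exp (-φ r)) * φx r)) -
             (-κn * ((Q' * Real.exp (φ r) + Q * Real.exp (φ r) * φx r) -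
                (Q * Real.exp (φ r)) * φx r)))) =
      R ^ 2 * Real.sqrt (S * Q) *
        (κn * (∫ ξ in Set.Ioo (0:ℝ) 1,
            ξ * Real.exp (φ (R * ξ) - (1/2) * Real.log (S / Q))) * (Q' / Q) -
         κp * (∫ ξ in Set.Ioo (0:ℝ) 1,
            ξ * Real.exp (-(φ (R * ξ) - (1/2) * Real.log (S / Q)))) * (S' / S)) := by
  set B := ∫ r in Ioo 0 R, r * exp (φ r)
  set A := ∫ r in Ioo 0 R, r * exp (-φ r)
  have hSQ : 0 < S / Q := div_pos hS hQ
  have hG₂ : ∫ ξ in Ioo 0 1, ξ * exp (φ (R * ξ) - 1 / 2 * log (S / Q))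
      = B / R ^ 2 / √(S / Q) := by
    simp_rw [exp_sub, exp_half_mul_log hSQ, ← mul_div_assoc, integral_div,
      setIntegral_Ioo_zero_one_mul_comp_mul hR fun r => exp (φ r)]
    rfl
  have hG₁ : ∫ ξ in Ioo 0 1, ξ * exp (-(φ (R * ξ) - 1 / 2 * log (S / Q)))
      = A / R ^ 2 * √(S / Q) := by
    simp_rw [sub_eq_add_neg, neg_add, neg_neg, exp_add, exp_half_mul_log hSQ, ← mul_assoc,
      integral_mul_const, setIntegral_Ioo_zero_one_mul_comp_mul hR fun r => exp (-φ r)]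
    rfl
  have hs : Q * √(S / Q) ^ 2 = S := by rw [sq_sqrt hSQ.le, mul_div_cancel₀ S hQ.ne']
  rw [hG₂, hG₁, sqrt_mul_eq_mul_sqrt_div hQ.le]
  calc _ = ∫ r in Ioo 0 R, κn * Q' * (r * exp (φ r)) - κp * S' * (r * exp (-φ r)) :=
        setIntegral_congr_fun measurableSet_Ioo fun r _ => by ring
    _ = κn * Q' * B - κp * S' * A := by
        rw [integral_sub (hintp.const_mul _) (hintm.const_mul _), integral_const_mul,
          integral_const_mul]
    _ = _ := by
        field_simp
        linear_combination κp * S' * A * hs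

/-- The leading-order current formula of the Quasi-1D PNP model: with
Boltzmann-form concentrations `p = S e^{-φ}`, `n = Q e^{φ}`, axial derivatives
`pₓ, nₓ` given by the chain rule, and fluxes `u_p = -κ_p (pₓ + p φₓ)`,
`u_n = -κ_n (nₓ - n φₓ)`, the cross-sectional current
`I = ∫₀^R r (u_p - u_n) dr` equals
`R² √(SQ) (κ_n G₂ Q'/Q - κ_p G₁ S'/S)`, where
`ψ(ξ) = φ(Rξ) - (1/2)log(S/Q)`, `G₁ = ∫₀¹ ξ e^{-ψ} dξ`, `G₂ = ∫₀¹ ξ e^{ψ} dξ`. -/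
theorem stmt_15 (R κp κn Q S Q' S' : ℝ) (hR : 0 < R) (hκp : 0 < κp)
    (hκn : 0 < κn) (hQ : 0 < Q) (hS : 0 < S) (φ φx : ℝ → ℝ)
    (hintp : IntegrableOn (fun r => r * Real.exp (φ r)) (Set.Ioo 0 R))
    (hintm : IntegrableOn (fun r => r * Real.exp (-φ r)) (Set.Ioo 0 R)) :
    (∫ r in Set.Ioo (0:ℝ) R,
        r * ((-κp * ((S' * Real.exp (-φ r) - S * Real.exp (-φ r) * φx r) +
                (S * Real.exp (-φ r)) * φx r)) -
             (-κn * ((Q' * Real.exp (φ r) + Q * Real.exp (φ r) * φx r) -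
                (Q * Real.exp (φ r)) * φx r)))) =
      R ^ 2 * Real.sqrt (S * Q) *
        (κn * (∫ ξ in Set.Ioo (0:ℝ) 1,
            ξ * Real.exp (φ (R * ξ) - (1/2) * Real.log (S / Q))) * (Q' / Q) -
         κp * (∫ ξ in Set.Ioo (0:ℝ) 1,
            ξ * Real.exp (-(φ (R * ξ) - (1/2) * Real.log (S / Q)))) * (S' / S)) :=
  stmt_15_general R κp κn Q S Q' S' hR hQ hS φ φx hintp hintm
end
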